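/- arXiv:math/0005165 — 2 statements merged into one kernel-verified Lean document; each statement's English description precedes it below -/
import Mathlib

section
/- Let (E, ω) have a symplectic basis x_1,…,x_n, y_1,…,y_n, i.e., a basis with ω(x_i, y_j) = δ_{ij} and ω(x_i, x_j) = ω(y_i, y_j) = 0. Then for all f, g ∈ TE, {f, g}_ω ≡ Σ_{i=1}^n ( (∂f/∂x_i)·(∂g/∂y_i) − (∂f/∂y_i)·(∂g/∂x_i) ) modulo [TE,TE], where · is the product in TE and ∂/∂x_i, ∂/∂y_i are cyclic derivatives. That is, Kontsevich's coordinate formula for the Poisson bracket agrees with the bracket {·,·}_ω on TE/[TE,TE]. -/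
/- STATEMENT 5: If (E, ω) has a symplectic basis x_1,…,x_n, y_1,…,y_n, then for all
f, g ∈ TE one has {f, g}_ω ≡ Σ_i ( (∂f/∂x_i)·(∂g/∂y_i) − (∂f/∂y_i)·(∂g/∂x_i) )
modulo [TE,TE], where ∂/∂x_i, ∂/∂y_i are the cyclic derivatives. (Kontsevich's
coordinate formula agrees with the bracket {·,·}_ω on TE/[TE,TE].)

Having fixed the basis, TE is identified with the free associative k-algebra on the
letters x_1,…,x_n, y_1,…,y_n; we index the letters by `Fin n ⊕ Fin n`, with
`Sum.inl i = x_i` and `Sum.inr i = y_i`. -/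

noncomputable section

open scoped BigOperators

/-- The word (monomial) in the free algebra associated to a list of letters. -/
def wordProd (k : Type*) [Field k] {ι : Type*} (w : List ι) : FreeAlgebra k ι :=
  (w.map fun z => FreeAlgebra.ι k z).prod

/-- The list obtained from `w` by deleting the entry at position `i` and cyclically rotating
so that the entries after position `i` come first. -/
def rotAt {ι : Type*} (w : List ι) (i : ℕ) : List ι :=
  w.drop (i + 1) ++ w.take i

/-- `[TE,TE]`: the k-linear span of all commutators in the free algebra. -/
def commSpan (k ι : Type*) [Field k] : Submodule k (FreeAlgebra k ι) :=
  Submodule.span k {z | ∃ a b : FreeAlgebra k ι, z = a * b - b * a}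

/-- The value of the pairing `{·,·}_ω` on a pair of words `u_1⋯u_p`, `v_1⋯v_q`:
`Σ_{i,j} ω(u_i, v_j) • u_{i+1}⋯u_p u_1⋯u_{i−1} v_{j+1}⋯v_q v_1⋯v_{j−1}`. -/
def wordBracket {k : Type*} [Field k] {ι : Type*} (ω : ι → ι → k) (u v : List ι) :
    FreeAlgebra k ι :=
  ∑ i : Fin u.length, ∑ j : Fin v.length,
    ω (u.get i) (v.get j) • wordProd k (rotAt u i ++ rotAt v j)

theorem ginzburg_kontsevich_formula
    (k : Type*) [Field k] [CharZero k] (n : ℕ)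
    (ω : (Fin n ⊕ Fin n) → (Fin n ⊕ Fin n) → k)
    -- ω(x_i, y_j) = δ_{ij}, ω(y_i, x_j) = −δ_{ij}, ω(x_i, x_j) = ω(y_i, y_j) = 0:
    (hxy : ∀ i j : Fin n, ω (Sum.inl i) (Sum.inr j) = if i = j then 1 else 0)
    (hyx : ∀ i j : Fin n, ω (Sum.inr i) (Sum.inl j) = if i = j then -1 else 0)
    (hxx : ∀ i j : Fin n, ω (Sum.inl i) (Sum.inl j) = 0)
    (hyy : ∀ i j : Fin n, ω (Sum.inr i) (Sum.inr j) = 0)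
    -- `Br` is the k-bilinear pairing `{·,·}_ω`, determined by its values on words:
    (Br : FreeAlgebra k (Fin n ⊕ Fin n) →ₗ[k]
      FreeAlgebra k (Fin n ⊕ Fin n) →ₗ[k] FreeAlgebra k (Fin n ⊕ Fin n))
    (hBr : ∀ u v : List (Fin n ⊕ Fin n),
      Br (wordProd k u) (wordProd k v) = wordBracket ω u v)
    -- `D z` is the cyclic derivative ∂/∂z, determined k-linearly by its values on words:
    (D : (Fin n ⊕ Fin n) →
      FreeAlgebra k (Fin n ⊕ Fin n) →ₗ[k] FreeAlgebra k (Fin n ⊕ Fin n))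
    (hD : ∀ z : Fin n ⊕ Fin n, ∀ w : List (Fin n ⊕ Fin n),
      D z (wordProd k w) =
        ∑ j : Fin w.length, if w.get j = z then wordProd k (rotAt w j) else 0) :
    -- Kontsevich's coordinate formula for the bracket, modulo [TE,TE]:
    ∀ f g : FreeAlgebra k (Fin n ⊕ Fin n),
      Br f g - ∑ i : Fin n,
          (D (Sum.inl i) f * D (Sum.inr i) g - D (Sum.inr i) f * D (Sum.inl i) g)
        ∈ commSpan k (Fin n ⊕ Fin n) := by
  classical
  -- wordProd is multiplicative over list append
  have hW : ∀ s t : List (Fin n ⊕ Fin n),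
      wordProd k (s ++ t) = wordProd k s * wordProd k t := by
    intro s t; simp [wordProd]
  -- the span of all words is the whole algebra
  have htop : Submodule.span k
      (Set.range (wordProd k : List (Fin n ⊕ Fin n) → FreeAlgebra k (Fin n ⊕ Fin n))) = ⊤ := by
    have hmul : ∀ a ∈ Submodule.span k
        (Set.range (wordProd k : List (Fin n ⊕ Fin n) → FreeAlgebra k (Fin n ⊕ Fin n))),
        ∀ b ∈ Submodule.span k
        (Set.range (wordProd k : List (Fin n ⊕ Fin n) → FreeAlgebra k (Fin n ⊕ Fin n))),
        a * b ∈ Submodule.span k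
        (Set.range (wordProd k : List (Fin n ⊕ Fin n) → FreeAlgebra k (Fin n ⊕ Fin n))) := by
      intro a ha
      refine Submodule.span_induction ?_ ?_ ?_ ?_ ha
      · rintro x ⟨u, rfl⟩ b hb
        refine Submodule.span_induction ?_ ?_ ?_ ?_ hb
        · rintro y ⟨v, rfl⟩
          rw [← hW]
          exact Submodule.subset_span ⟨u ++ v, rfl⟩
        · rw [mul_zero]; exact zero_mem _
        · intro x y _ _ h1 h2; rw [mul_add]; exact add_mem h1 h2
        · intro c x _ h; rw [mul_smul_comm]; exact Submodule.smul_mem _ _ h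
      · intro b _; rw [zero_mul]; exact zero_mem _
      · intro x y _ _ h1 h2 b hb; rw [add_mul]; exact add_mem (h1 b hb) (h2 b hb)
      · intro c x _ h b hb; rw [smul_mul_assoc]; exact Submodule.smul_mem _ _ (h b hb)
    rw [eq_top_iff]
    rintro x -
    refine FreeAlgebra.induction k _ ?_ ?_ (fun a b ha hb => hmul a ha b hb)
      (fun a b ha hb => add_mem ha hb) x
    · intro r
      have h1 : (algebraMap k (FreeAlgebra k (Fin n ⊕ Fin n))) r
          = r • wordProd k ([] : List (Fin n ⊕ Fin n)) := by
        simp [wordProd, Algebra.smul_def]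
      rw [h1]
      exact Submodule.smul_mem _ _ (Submodule.subset_span ⟨[], rfl⟩)
    · intro x
      exact Submodule.subset_span ⟨[x], by simp [wordProd]⟩
  -- the scalar identity expressing ω via the symplectic basis
  have hcoef : ∀ z z' : Fin n ⊕ Fin n,
      (∑ i : Fin n, ((if z = Sum.inl i then (1:k) else 0) * (if z' = Sum.inr i then (1:k) else 0)
        - (if z = Sum.inr i then (1:k) else 0) * (if z' = Sum.inl i then (1:k) else 0)))
        = ω z z' := by
    rintro (a | a) (b | b)
    · simp [hxx]
    · simp [hxy a b, Sum.inl.injEq, Sum.inr.injEq, ite_and, mul_ite, mul_one, mul_zero,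
        Finset.sum_ite_eq, eq_comm]
    · simp only [hyx a b, Sum.inl.injEq, Sum.inr.injEq, ite_and, mul_ite, mul_one, mul_zero]
      simp [Finset.sum_ite_eq, eq_comm]
      split_ifs <;> norm_num
    · simp [hyy]
  -- product of two "if-zero" terms as a scalar action
  have hmulite : ∀ (P Q : Prop) [Decidable P] [Decidable Q]
      (x y : FreeAlgebra k (Fin n ⊕ Fin n)),
      (if P then x else 0) * (if Q then y else 0)
        = ((if P then (1:k) else 0) * (if Q then (1:k) else 0)) • (x * y) := by
    intro P Q _ _ x y; split_ifs <;> simp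
  -- the identity on words
  have key : ∀ u v : List (Fin n ⊕ Fin n),
      wordBracket ω u v = ∑ i : Fin n,
        (D (Sum.inl i) (wordProd k u) * D (Sum.inr i) (wordProd k v)
          - D (Sum.inr i) (wordProd k u) * D (Sum.inl i) (wordProd k v)) := by
    intro u v
    simp only [hD, Finset.sum_mul_sum, ← Finset.sum_sub_distrib]
    rw [Finset.sum_comm]
    simp only [wordBracket, hW]
    refine Finset.sum_congr rfl fun a _ => ?_
    rw [Finset.sum_comm]
    refine Finset.sum_congr rfl fun b _ => ?_
    simp only [hmulite, ← sub_smul, ← Finset.sum_smul, hcoef]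
  -- package the Kontsevich formula as a bilinear map
  set S : FreeAlgebra k (Fin n ⊕ Fin n) →ₗ[k]
      FreeAlgebra k (Fin n ⊕ Fin n) →ₗ[k] FreeAlgebra k (Fin n ⊕ Fin n) :=
    ∑ i : Fin n,
      ((LinearMap.mul k (FreeAlgebra k (Fin n ⊕ Fin n))).compl₁₂ (D (Sum.inl i)) (D (Sum.inr i))
        - (LinearMap.mul k (FreeAlgebra k (Fin n ⊕ Fin n))).compl₁₂
            (D (Sum.inr i)) (D (Sum.inl i))) with hSdef
  have hS : ∀ f g : FreeAlgebra k (Fin n ⊕ Fin n),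
      S f g = ∑ i : Fin n,
        (D (Sum.inl i) f * D (Sum.inr i) g - D (Sum.inr i) f * D (Sum.inl i) g) := by
    intro f g
    simp [hSdef, LinearMap.sum_apply, LinearMap.sub_apply, LinearMap.compl₁₂_apply,
      LinearMap.mul_apply']
  have hBS : Br = S := by
    apply LinearMap.ext_on htop
    rintro x ⟨u, rfl⟩
    apply LinearMap.ext_on htop
    rintro y ⟨v, rfl⟩
    rw [hBr, hS, key]
  intro f g
  rw [hBS, ← hS f g, sub_self]
  exact zero_mem _
end
end

section
/- Fix a basis of the finite-dimensional k-vector space E. For every a, b ∈ TE and every basis letter z, the cyclic derivative of the commutator vanishes: ∂(a·b − b·a)/∂z = 0. Hence each cyclic derivative ∂/∂z descends to a well-defined k-linear map TE/[TE,TE] → TE. -/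
/- STATEMENT 6: Fix a basis of the finite-dimensional k-vector space E, identifying TE
with the free associative k-algebra on the basis letters. For every a, b ∈ TE and every
basis letter z, the cyclic derivative of the commutator vanishes: ∂(ab − ba)/∂z = 0.
Hence each ∂/∂z descends to a well-defined k-linear map TE/[TE,TE] → TE. -/

noncomputable section

open scoped BigOperators

section Aux

variable (k : Type*) [Field k] {ι : Type*} [DecidableEq ι]

omit [DecidableEq ι] in
lemma wordProd_append (u v : List ι) :
    wordProd k (u ++ v) = wordProd k u * wordProd k v := by
  simp [wordProd]

/-- The cyclic-derivative sum attached to a word. -/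
def cycSum (z : ι) (w : List ι) : FreeAlgebra k ι :=
  ∑ j : Fin w.length, if w.get j = z then wordProd k (rotAt w j) else 0

lemma cycSum_rot (z : ι) (x : ι) (w : List ι) :
    cycSum k z (x :: w) = cycSum k z (w ++ [x]) := by
  unfold cycSum
  show (∑ j : Fin (w.length + 1), if (x :: w).get j = z then wordProd k (rotAt (x :: w) j) else 0) = _
  rw [Fin.sum_univ_succ]
  have hlen : (w ++ [x]).length = w.length + 1 := by simp
  rw [show (∑ j : Fin (w ++ [x]).length,
        if (w ++ [x]).get j = z then wordProd k (rotAt (w ++ [x]) j) else 0)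
      = ∑ j : Fin (w.length + 1),
        if (w ++ [x]).get (finCongr hlen.symm j) = z
          then wordProd k (rotAt (w ++ [x]) (finCongr hlen.symm j)) else 0 from
    (Fintype.sum_equiv (finCongr hlen.symm) _ _ (fun j => rfl)).symm]
  rw [Fin.sum_univ_castSucc, add_comm]
  congr 1
  · apply Finset.sum_congr rfl
    intro j _
    have hj : (j : ℕ) < w.length := j.isLt
    have h1 : (x :: w).get j.succ = w.get j := rfl
    have h2 : ((w ++ [x]).get ((finCongr hlen.symm) j.castSucc)) = w.get j := by
      simp [List.getElem_append_left hj]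
    rw [h1, h2]
    congr 2
    show rotAt (x :: w) (j + 1) = rotAt (w ++ [x]) j
    unfold rotAt
    simp only [List.drop_succ_cons, List.take_succ_cons]
    rw [List.drop_append_of_le_length (by omega), List.take_append_of_le_length (by omega)]
    simp
  · have h2 : ((w ++ [x]).get ((finCongr hlen.symm) (Fin.last w.length))) = x := by
      simp
    have h1 : (x :: w).get (0 : Fin (w.length + 1)) = x := rfl
    rw [h1, h2]
    congr 2
    show rotAt (x :: w) 0 = rotAt (w ++ [x]) w.length
    unfold rotAt
    simp

lemma cycSum_comm (z : ι) (u v : List ι) :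
    cycSum k z (u ++ v) = cycSum k z (v ++ u) := by
  induction u generalizing v with
  | nil => simp
  | cons x u' ih =>
    calc cycSum k z ((x :: u') ++ v) = cycSum k z (x :: (u' ++ v)) := rfl
    _ = cycSum k z ((u' ++ v) ++ [x]) := cycSum_rot k z x (u' ++ v)
    _ = cycSum k z (u' ++ (v ++ [x])) := by rw [List.append_assoc]
    _ = cycSum k z ((v ++ [x]) ++ u') := ih (v ++ [x])
    _ = cycSum k z (v ++ (x :: u')) := by rw [List.append_assoc]; rfl

omit [DecidableEq ι] in
lemma span_wordProd :
    Submodule.span k (Set.range (wordProd k (ι := ι))) = ⊤ := by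
  rw [eq_top_iff]
  intro a _
  induction a using FreeAlgebra.induction with
  | grade0 r =>
    have : (algebraMap k (FreeAlgebra k ι)) r = r • wordProd k ([] : List ι) := by
      simp [wordProd, Algebra.smul_def]
    rw [this]
    exact Submodule.smul_mem _ _ (Submodule.subset_span ⟨[], rfl⟩)
  | grade1 x =>
    exact Submodule.subset_span ⟨[x], by simp [wordProd]⟩
  | mul a b ha hb =>
    have := Submodule.mul_mem_mul (ha trivial) (hb trivial)
    rw [Submodule.span_mul_span] at this
    refine Submodule.span_le.2 ?_ this
    rintro y ⟨p, ⟨up, rfl⟩, q, ⟨uq, rfl⟩, rfl⟩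
    exact Submodule.subset_span ⟨up ++ uq, by simp [wordProd_append]⟩
  | add a b ha hb => exact Submodule.add_mem _ (ha trivial) (hb trivial)

end Aux

theorem ginzburg_cyclic_derivative_of_commutator
    (k : Type*) [Field k] [CharZero k]
    (ι : Type*) [Fintype ι] [DecidableEq ι]
    -- `D z` is the cyclic derivative ∂/∂z, determined k-linearly by its values on words:
    (D : ι → FreeAlgebra k ι →ₗ[k] FreeAlgebra k ι)
    (hD : ∀ z : ι, ∀ w : List ι,
      D z (wordProd k w) =
        ∑ j : Fin w.length, if w.get j = z then wordProd k (rotAt w j) else 0) :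
    -- cyclic derivatives of commutators vanish:
    (∀ z : ι, ∀ a b : FreeAlgebra k ι, D z (a * b - b * a) = 0) ∧
    -- hence each ∂/∂z descends to a well-defined k-linear map TE/[TE,TE] → TE:
    (∀ z : ι, ∃ DQ : (FreeAlgebra k ι ⧸ commSpan k ι) →ₗ[k] FreeAlgebra k ι,
      ∀ f : FreeAlgebra k ι, DQ (Submodule.Quotient.mk f) = D z f) := by
  have key : ∀ z : ι, ∀ a b : FreeAlgebra k ι, D z (a * b) = D z (b * a) := by
    intro z a b
    have ha : a ∈ Submodule.span k (Set.range (wordProd k (ι := ι))) := by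
      rw [span_wordProd]; trivial
    have hb : b ∈ Submodule.span k (Set.range (wordProd k (ι := ι))) := by
      rw [span_wordProd]; trivial
    induction ha using Submodule.span_induction generalizing b with
    | mem x hx =>
      obtain ⟨u, rfl⟩ := hx
      induction hb using Submodule.span_induction with
      | mem y hy =>
        obtain ⟨v, rfl⟩ := hy
        rw [← wordProd_append, ← wordProd_append, hD, hD]
        exact cycSum_comm k z u v
      | zero => simp
      | add y1 y2 _ _ h1 h2 => simp [mul_add, add_mul, map_add, h1, h2]
      | smul c y _ h => simp [mul_smul_comm, smul_mul_assoc, map_smul, h]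
    | zero => simp
    | add x1 x2 _ _ h1 h2 => simp [mul_add, add_mul, map_add, h1 b hb, h2 b hb]
    | smul c x _ h => simp [mul_smul_comm, smul_mul_assoc, map_smul, h b hb]
  have hzero : ∀ z : ι, ∀ a b : FreeAlgebra k ι, D z (a * b - b * a) = 0 := by
    intro z a b
    rw [map_sub, key z a b, sub_self]
  refine ⟨hzero, fun z => ?_⟩
  have hle : commSpan k ι ≤ LinearMap.ker (D z) := by
    rw [commSpan, Submodule.span_le]
    rintro x ⟨a, b, rfl⟩
    exact LinearMap.mem_ker.2 (hzero z a b)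
  exact ⟨Submodule.liftQ _ (D z) hle, fun f => rfl⟩

end
end
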